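/- arXiv:1504.04253 — 2 statements merged into one kernel-verified Lean document; each statement's English description precedes it below -/
import Mathlib

section
/- Let Q ∈ L(H) be a projection (Q² = Q) on a Krein space (H, J). Then Q is J-normal (Q Q^# = Q^# Q) if and only if there exist a J-selfadjoint projection E (E² = E, E^# = E) and a projection P ∈ L(H) with P P^# = P^# P = 0 such that Q = E + P. Moreover, E and P are uniquely determined by Q, with E = Q Q^# and P = Q(I − Q^#). -/
open ContinuousLinearMap

variable {H : Type*} [NormedAddCommGroup H] [InnerProductSpace ℂ H] [CompleteSpace H]

/-- The `J`-adjoint `T^# = J T* J`. -/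
noncomputable def sharp (J T : H →L[ℂ] H) : H →L[ℂ] H :=
  J ∘L (ContinuousLinearMap.adjoint T) ∘L J


lemma sharp_eq (J T : H →L[ℂ] H) : sharp J T = J * adjoint T * J := rfl

lemma adjoint_mul (A B : H →L[ℂ] H) : adjoint (A * B) = adjoint B * adjoint A :=
  adjoint_comp A B

lemma sharp_mul (J : H →L[ℂ] H) (hJ2 : J ∘L J = 1) (A B : H →L[ℂ] H) :
    sharp J (A * B) = sharp J B * sharp J A := by
  have h2 : J * J = 1 := hJ2
  simp only [sharp_eq, adjoint_mul]
  calc J * (adjoint B * adjoint A) * J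
      = J * adjoint B * (J * J) * adjoint A * J := by rw [h2]; noncomm_ring
    _ = J * adjoint B * J * (J * adjoint A * J) := by noncomm_ring

lemma sharp_sharp (J : H →L[ℂ] H) (hJsa : ContinuousLinearMap.adjoint J = J)
    (hJ2 : J ∘L J = 1) (T : H →L[ℂ] H) : sharp J (sharp J T) = T := by
  have h2 : J * J = 1 := hJ2
  simp only [sharp_eq, adjoint_mul, adjoint_adjoint, hJsa]
  calc J * (J * (T * J)) * J
      = (J * J) * T * (J * J) := by noncomm_ring
    _ = T := by rw [h2]; simp

lemma sharp_add (J A B : H →L[ℂ] H) : sharp J (A + B) = sharp J A + sharp J B := by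
  simp only [sharp_eq, map_add]; noncomm_ring

lemma sharp_zero (J : H →L[ℂ] H) : sharp J 0 = 0 := by
  simp [sharp_eq]

lemma sharp_sub (J A B : H →L[ℂ] H) : sharp J (A - B) = sharp J A - sharp J B := by
  simp only [sharp_eq, map_sub]; noncomm_ring


/-- A projection `Q` is `J`-normal iff `Q = E + P` with `E` a `J`-selfadjoint projection and
`P` a projection with `P P^# = P^# P = 0`; moreover `E = Q Q^#` and `P = Q(I − Q^#)`. -/
theorem stmt2 (J Q : H →L[ℂ] H)
    (hJsa : ContinuousLinearMap.adjoint J = J) (hJ2 : J ∘L J = 1)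
    (hQ : Q ∘L Q = Q) :
    (Q ∘L sharp J Q = sharp J Q ∘L Q ↔
      ∃ E P : H →L[ℂ] H, E ∘L E = E ∧ sharp J E = E ∧ P ∘L P = P ∧
        P ∘L sharp J P = 0 ∧ sharp J P ∘L P = 0 ∧ Q = E + P) ∧
    (∀ E P : H →L[ℂ] H, E ∘L E = E → sharp J E = E → P ∘L P = P →
        P ∘L sharp J P = 0 → sharp J P ∘L P = 0 → Q = E + P →
      E = Q ∘L sharp J Q ∧ P = Q ∘L (1 - sharp J Q)) := by
  have hQQ : Q * Q = Q := hQ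
  set R := sharp J Q with hRdef
  have hRR : R * R = R := by
    have h1 := sharp_mul J hJ2 Q Q
    rw [hQQ] at h1
    exact h1.symm
  have hsR : sharp J R = Q := sharp_sharp J hJsa hJ2 Q
  -- the key computation in the backward / uniqueness direction
  have key : ∀ E P : H →L[ℂ] H, E ∘L E = E → sharp J E = E → P ∘L P = P →
      P ∘L sharp J P = 0 → sharp J P ∘L P = 0 → Q = E + P →
      Q * R = E ∧ R * Q = E := by
    intro E P hE hsE hP hPS hSP hq
    have hE' : E * E = E := hE
    have hP' : P * P = P := hP
    set S := sharp J P with hSdef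
    have hPS' : P * S = 0 := hPS
    have hSP' : S * P = 0 := hSP
    have h0 : (E + P) * (E + P) = E + P := by rw [← hq]; exact hQQ
    have h1 : E * E + E * P + P * E + P * P = E + P := by rw [← h0]; noncomm_ring
    rw [hE', hP'] at h1
    have hEP : E * P + P * E = 0 := by
      have h2 : E * P + P * E = (E + E * P + P * E + P) - (E + P) := by abel
      rw [h1, sub_self] at h2
      exact h2
    have hEPn : E * P = -(P * E) := eq_neg_of_add_eq_zero_left hEP
    have hPEn : P * E = -(E * P) := eq_neg_of_add_eq_zero_right hEP
    have hEP1 : E * P = -(E * (P * E)) := by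
      calc E * P = E * (E * P) := by rw [← mul_assoc, hE']
        _ = -(E * (P * E)) := by rw [hEPn, mul_neg]
    have hPE1 : P * E = -(E * (P * E)) := by
      calc P * E = (P * E) * E := by rw [mul_assoc, hE']
        _ = -((E * P) * E) := by rw [hPEn, neg_mul]
        _ = -(E * (P * E)) := by rw [mul_assoc]
    have hEPPE : E * P = P * E := hEP1.trans hPE1.symm
    have hEP0 : E * P = 0 := by
      have h2 : E * P + E * P = 0 := by nth_rewrite 2 [hEPPE]; exact hEP
      have h3 : (2 : ℂ) • (E * P) = 0 := by rw [two_smul]; exact h2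
      simpa using (smul_eq_zero.mp h3).resolve_left (by norm_num)
    have hPE0 : P * E = 0 := by rw [← hEPPE]; exact hEP0
    have hSE0 : S * E = 0 := by
      have h3 := sharp_mul J hJ2 E P
      rw [hEP0, sharp_zero, hsE] at h3
      exact h3.symm
    have hES0 : E * S = 0 := by
      have h3 := sharp_mul J hJ2 P E
      rw [hPE0, sharp_zero, hsE] at h3
      exact h3.symm
    have hRES : R = E + S := by
      rw [hRdef, hq, sharp_add, hsE]
    constructor
    · calc Q * R = (E + P) * (E + S) := by rw [hq, hRES]
        _ = E * E + E * S + P * E + P * S := by noncomm_ring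
        _ = E := by rw [hE', hES0, hPE0, hPS']; abel
    · calc R * Q = (E + S) * (E + P) := by rw [hq, hRES]
        _ = E * E + E * P + S * E + S * P := by noncomm_ring
        _ = E := by rw [hE', hEP0, hSE0, hSP']; abel
  constructor
  · constructor
    · -- forward: J-normal → decomposition
      intro h
      have h' : Q * R = R * Q := h
      have hRQ : R * Q = Q * R := h'.symm
      have hQQ' : ∀ X : H →L[ℂ] H, Q * (Q * X) = Q * X := fun X => by
        rw [← mul_assoc, hQQ]
      have hRR' : ∀ X : H →L[ℂ] H, R * (R * X) = R * X := fun X => by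
        rw [← mul_assoc, hRR]
      have hc : ∀ X : H →L[ℂ] H, R * (Q * X) = Q * (R * X) := fun X => by
        rw [← mul_assoc, hRQ, mul_assoc]
      have hsE : sharp J (Q * R) = Q * R := by
        rw [sharp_mul J hJ2, hsR, hRdef]
      refine ⟨Q * R, Q - Q * R, ?_, hsE, ?_, ?_, ?_, by abel⟩
      · show (Q * R) * (Q * R) = Q * R
        simp only [mul_assoc, hc, hQQ', hRR', hQQ, hRR, hRQ]
      · show (Q - Q * R) * (Q - Q * R) = Q - Q * R
        simp only [mul_sub, sub_mul, mul_assoc, hc, hQQ', hRR', hQQ, hRR, hRQ]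
        abel
      · show (Q - Q * R) * sharp J (Q - Q * R) = 0
        rw [sharp_sub, hsE, ← hRdef]
        simp only [mul_sub, sub_mul, mul_assoc, hc, hQQ', hRR', hQQ, hRR, hRQ]
        abel
      · show sharp J (Q - Q * R) * (Q - Q * R) = 0
        rw [sharp_sub, hsE, ← hRdef]
        simp only [mul_sub, sub_mul, mul_assoc, hc, hQQ', hRR', hQQ, hRR, hRQ]
        abel
    · rintro ⟨E, P, hE, hsE, hP, hPS, hSP, hq⟩
      obtain ⟨h1, h2⟩ := key E P hE hsE hP hPS hSP hq
      show Q * R = R * Q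
      rw [h1, h2]
  · intro E P hE hsE hP hPS hSP hq
    obtain ⟨h1, _⟩ := key E P hE hsE hP hPS hSP hq
    constructor
    · exact h1.symm
    · show P = Q * (1 - R)
      rw [mul_sub, mul_one, h1, hq]
      abel
end

section
/- Let (S, T) be a neutral dual pair in a Krein space (H,J), and let P ∈ L(H) be the projection onto S along T^{[⊥]}. Then the operator T₀ = P^# J restricted to S is a bounded bijection from S onto T, where P^# is the projection onto T along S^{[⊥]}. -/
open ContinuousLinearMap

variable {H : Type*} [NormedAddCommGroup H] [InnerProductSpace ℂ H] [CompleteSpace H]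

/-- The `J`-orthogonal companion `S^{[⊥]} = {f : [g,f] = 0 ∀ g ∈ S}` where `[g,f] = ⟪J g, f⟫`. -/
def jperp (J : H →L[ℂ] H) (S : Submodule ℂ H) : Submodule ℂ H where
  carrier := {f | ∀ g ∈ S, (inner ℂ (J g) f : ℂ) = 0}
  add_mem' := by
    intro a b ha hb g hg
    rw [inner_add_right, ha g hg, hb g hg, add_zero]
  zero_mem' := by
    intro g hg
    simp
  smul_mem' := by
    intro c a ha g hg
    rw [inner_smul_right, ha g hg, mul_zero]

/-! Since `J² = 1`, the map is `f ↦ J (P* f)`. The adjoint of an operator `A` with closed range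
maps `ran A` bijectively onto `ran A*`: injectively because `A* A y = 0` forces `A y = 0`, and onto
because `(ran A)^⊥ = ker A*`. For the idempotent `P`, `ran P* = (ker P)^⊥ = (T^{[⊥]})^⊥ = J T`,
as `T^{[⊥]}` is the orthogonal complement of the closed subspace `J T`; finally `J` maps `J T`
back onto `T`. -/

open scoped InnerProduct

namespace ContinuousLinearMap

variable {𝕜 E F : Type*} [RCLike 𝕜]
  [NormedAddCommGroup E] [InnerProductSpace 𝕜 E] [CompleteSpace E]
  [NormedAddCommGroup F] [InnerProductSpace 𝕜 F] [CompleteSpace F]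

theorem injOn_adjoint_range (A : E →L[𝕜] F) : Set.InjOn (A†) A.range := by
  rintro _ ⟨x, rfl⟩ _ ⟨y, rfl⟩ h
  have hxy : x - y ∈ (A† ∘L A).ker := by simpa [sub_eq_zero] using h
  rwa [ker_adjoint_comp_self, LinearMap.mem_ker, map_sub, coe_coe, sub_eq_zero] at hxy

theorem image_adjoint_range (A : E →L[𝕜] F) (hA : IsClosed (A.range : Set F)) :
    A† '' A.range = (A†).range := by
  refine subset_antisymm (Set.image_subset_range _ _) ?_
  rintro _ ⟨y, rfl⟩
  have : CompleteSpace A.range := hA.completeSpace_coe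
  obtain ⟨s, hs, u, hu, rfl⟩ := A.range.exists_add_mem_mem_orthogonal y
  rw [orthogonal_range, LinearMap.mem_ker, coe_coe] at hu
  exact ⟨s, hs, by simp [hu]⟩

theorem bijOn_adjoint_range (A : E →L[𝕜] F) (hA : IsClosed (A.range : Set F)) :
    Set.BijOn (A†) A.range (A†).range :=
  image_adjoint_range A hA ▸ (injOn_adjoint_range A).bijOn_image

theorem range_adjoint_eq_orthogonal_ker {P : E →L[𝕜] E} (hP : IsIdempotentElem P) :
    (P†).range = P.kerᗮ := by
  rw [orthogonal_ker, eq_comm, IsClosed.submodule_topologicalClosure_eq]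
  exact (IsIdempotentElem.isTopCompl hP.star).isClosed

end ContinuousLinearMap

theorem jperp_eq_orthogonal_map {E : Type*} [NormedAddCommGroup E] [InnerProductSpace ℂ E]
    (J : E →L[ℂ] E) (T : Submodule ℂ E) : jperp J T = (T.map (J : E →ₗ[ℂ] E))ᗮ := by
  ext f
  simp [jperp, Submodule.mem_orthogonal]

theorem stmt6_general (J : H →L[ℂ] H)
    (hJ2 : J ∘L J = 1)
    (S T : Submodule ℂ H)
    (hSc : IsClosed (S : Set H)) (hTc : IsClosed (T : Set H))
    (P : H →L[ℂ] H) (hP : P ∘L P = P)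
    (hran : LinearMap.range (P : H →ₗ[ℂ] H) = S) (hker : LinearMap.ker (P : H →ₗ[ℂ] H) = jperp J T) :
    Set.BijOn (fun f => sharp J P (J f)) (S : Set H) (T : Set H) := by
  have hJ : Function.Involutive J := fun x => by simpa using congr($hJ2 x)
  have hJT : (T.map (J : H →ₗ[ℂ] H) : Set H) = J ⁻¹' T := by
    rw [Submodule.map_coe, coe_coe, hJ.image_eq_preimage_symm]
  have : CompleteSpace (T.map (J : H →ₗ[ℂ] H)) :=
    (hJT ▸ hTc.preimage J.continuous).completeSpace_coe
  have hPT : (P†).range = T.map (J : H →ₗ[ℂ] H) := by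
    rw [range_adjoint_eq_orthogonal_ker hP, hker, jperp_eq_orthogonal_map,
      Submodule.orthogonal_orthogonal]
  have hadj : Set.BijOn (P†) S (T.map (J : H →ₗ[ℂ] H)) := by
    simpa [hran, hPT] using bijOn_adjoint_range P (hran ▸ hSc)
  have hJbij : Set.BijOn J (T.map (J : H →ₗ[ℂ] H)) T := by
    simpa [Set.image_image, hJ _] using hJ.injective.injOn.bijOn_image (s := J '' T)
  exact (hJbij.comp hadj).congr fun f _ => by simp [sharp, hJ f]

/-- For a neutral dual pair `(S,T)`, if `P` is the projection onto `S` along `T^{[⊥]}`, then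
`P^# J` restricted to `S` is a (bounded) bijection from `S` onto `T`. -/
theorem stmt6 (J : H →L[ℂ] H)
    (hJsa : ContinuousLinearMap.adjoint J = J) (hJ2 : J ∘L J = 1)
    (S T : Submodule ℂ H)
    (hSc : IsClosed (S : Set H)) (hTc : IsClosed (T : Set H))
    (hSneu : ∀ f ∈ S, (inner ℂ (J f) f : ℂ) = 0)
    (hTneu : ∀ f ∈ T, (inner ℂ (J f) f : ℂ) = 0)
    (hsum : ∀ x : H, ∃ a ∈ S, ∃ b ∈ jperp J T, x = a + b)
    (hdis : S ⊓ jperp J T = ⊥)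
    (P : H →L[ℂ] H) (hP : P ∘L P = P)
    (hran : LinearMap.range (P : H →ₗ[ℂ] H) = S) (hker : LinearMap.ker (P : H →ₗ[ℂ] H) = jperp J T) :
    Set.BijOn (fun f => sharp J P (J f)) (S : Set H) (T : Set H) :=
  stmt6_general J hJ2 S T hSc hTc P hP hran hker
end
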